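/- arXiv:1907.06586 — 3 statements merged into one kernel-verified Lean document; each statement's English description precedes it below -/
import Mathlib

section
/- For the n-distance d(x₁,…,xₙ) = max_{i}(x₍ᵢ₊₁₎ − x₍ᵢ₎) on ℝ (largest inner interval), for all x₁,…,xₙ,z ∈ ℝ we have d(x₁,…,xₙ) ≤ (2/n)·∑_{i=1}^n d(x₁,…,xₙ)ᵢᶻ, and the constant 2/n is optimal: equality holds when x₁ < x₂ = ⋯ = xₙ and z = (x₁+x₂)/2. -/
/-
Let `u < v` be consecutive order statistics of `x` with `v - u = largestGap x`, and let `w` be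
`z` clamped to `[u, v]`. Moving to `z` a coordinate other than one carrying `v` leaves no value
strictly between `w` and `v`, and moving one other than a coordinate carrying `u` leaves none
strictly between `u` and `w`. So each of the `n` coordinates carrying neither endpoint yields a
largest gap of at least `max (v - w) (w - u) ≥ (v - u) / 2`, while the two endpoint coordinates
together yield at least `(v - w) + (w - u) = v - u`; the sum is at least `(n + 2) (v - u) / 2`.
In the extremal configuration every modified tuple has largest gap exactly `(b - a) / 2`.
-/

open Finset Function

/-- `d` is an `n`-distance: nonnegative, vanishing exactly on constant tuples,
symmetric, and satisfying the simplex inequality. -/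
structure IsNDistance {X : Type*} {n : ℕ} (d : (Fin n → X) → ℝ) : Prop where
  nonneg : ∀ x, 0 ≤ d x
  eq_zero_iff : ∀ x, d x = 0 ↔ ∀ i j : Fin n, x i = x j
  symm : ∀ (x : Fin n → X) (σ : Equiv.Perm (Fin n)), d (x ∘ σ) = d x
  simplex : ∀ (x : Fin n → X) (z : X), d x ≤ ∑ i, d (Function.update x i z)

/-- The largest gap between consecutive order statistics. -/
noncomputable def largestGap {n : ℕ} (x : Fin (n + 2) → ℝ) : ℝ :=
  ⨆ i : Fin (n + 1), (x (Tuple.sort x i.succ) - x (Tuple.sort x i.castSucc))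

def IsGap {ι : Type*} (x : ι → ℝ) (u v : ℝ) : Prop :=
  (∃ i, x i ≤ u) ∧ (∃ j, v ≤ x j) ∧ ∀ k, x k ≤ u ∨ v ≤ x k

namespace IsGap

variable {ι : Type*} {x : ι → ℝ} {u v : ℝ}

theorem mono {u' v' : ℝ} (h : IsGap x u v) (hu : u ≤ u') (hv : v' ≤ v) : IsGap x u' v' := by
  obtain ⟨⟨i, hi⟩, ⟨j, hj⟩, hsplit⟩ := h
  refine ⟨⟨i, hi.trans hu⟩, ⟨j, hv.trans hj⟩, fun k => ?_⟩
  rcases hsplit k with hk | hk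
  exacts [.inl (hk.trans hu), .inr (hv.trans hk)]

variable [DecidableEq ι] {i j : ι} {z : ℝ}

theorem update_of_le_left (h : IsGap x u v) (hji : j ≠ i) (hj : v ≤ x j) (hz : z ≤ u) :
    IsGap (update x i z) u v := by
  refine ⟨⟨i, by simpa⟩, ⟨j, by simpa [hji]⟩, fun k => ?_⟩
  rcases eq_or_ne k i with rfl | hki
  · simpa using .inl hz
  · simpa [hki] using h.2.2 k

theorem update_of_le_right (h : IsGap x u v) (hji : j ≠ i) (hj : x j ≤ u) (hz : v ≤ z) :
    IsGap (update x i z) u v := by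
  refine ⟨⟨j, by simpa [hji]⟩, ⟨i, by simpa⟩, fun k => ?_⟩
  rcases eq_or_ne k i with rfl | hki
  · simpa using .inr hz
  · simpa [hki] using h.2.2 k

end IsGap

section largestGap

variable {n : ℕ} (x : Fin (n + 2) → ℝ)

theorem le_largestGap (k : Fin (n + 1)) :
    x (Tuple.sort x k.succ) - x (Tuple.sort x k.castSucc) ≤ largestGap x :=
  le_ciSup (f := fun k : Fin (n + 1) => x (Tuple.sort x k.succ) - x (Tuple.sort x k.castSucc))
    (Set.finite_range _).bddAbove k

theorem largestGap_nonneg : 0 ≤ largestGap x :=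
  (sub_nonneg.2 (Tuple.monotone_sort x (Fin.castSucc_lt_succ (i := 0)).le)).trans
    (le_largestGap x 0)

theorem exists_largestGap_eq :
    ∃ i j, largestGap x = x j - x i ∧ ∀ k, x k ≤ x i ∨ x j ≤ x k := by
  set σ := Tuple.sort x
  have hmono : Monotone (x ∘ σ) := Tuple.monotone_sort x
  obtain ⟨m, hm⟩ := exists_eq_ciSup_of_finite
    (f := fun m : Fin (n + 1) => x (σ m.succ) - x (σ m.castSucc))
  refine ⟨σ m.castSucc, σ m.succ, hm.symm, fun k => ?_⟩
  rw [← σ.apply_symm_apply k]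
  rcases le_or_gt (σ.symm k) m.castSucc with h | h
  · exact .inl (hmono h)
  · exact .inr (hmono (Fin.castSucc_lt_iff_succ_le.mp h))

variable {x}

theorem IsGap.sub_le_largestGap {u v : ℝ} (h : IsGap x u v) : v - u ≤ largestGap x := by
  obtain ⟨⟨i, hi⟩, ⟨j, hj⟩, hsplit⟩ := h
  set σ := Tuple.sort x
  have hmono : Monotone (x ∘ σ) := Tuple.monotone_sort x
  by_contra! hlt
  -- every consecutive gap is shorter than `v - u`, so the sorted values never jump past `u`
  have hbelow : ∀ m, x (σ m) ≤ u := by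
    refine Fin.induction ?_ fun k hk => ?_
    · calc x (σ 0) ≤ x (σ (σ.symm i)) := hmono (Fin.zero_le _)
        _ ≤ u := by simpa using hi
    · exact (hsplit _).resolve_right fun hv => by linarith [le_largestGap x k]
  linarith [largestGap_nonneg x, σ.apply_symm_apply j ▸ hbelow (σ.symm j)]

theorem largestGap_le_max_sub {m M : ℝ} (hm : ∀ k, m ≤ x k) (hM : ∀ k, x k ≤ M)
    (i : Fin (n + 2)) : largestGap x ≤ max (x i - m) (M - x i) := by
  obtain ⟨i', j', hgap, hsplit⟩ := exists_largestGap_eq x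
  rw [hgap]
  rcases hsplit i with h | h
  · exact le_max_of_le_right (by linarith [hM j'])
  · exact le_max_of_le_left (by linarith [hm i'])

end largestGap

theorem add_card_sub_two_mul_le_sum {ι : Type*} [Fintype ι] [DecidableEq ι] {f : ι → ℝ}
    {i j : ι} (hij : i ≠ j) {a b : ℝ} (hpair : a ≤ f i + f j)
    (hrest : ∀ k, k ≠ i → k ≠ j → b ≤ f k) :
    a + (Fintype.card ι - 2 : ℝ) * b ≤ ∑ k, f k := by
  have hj : j ∈ univ.erase i := mem_erase.2 ⟨hij.symm, mem_univ j⟩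
  have hcard : (#((univ.erase i).erase j) : ℝ) = Fintype.card ι - 2 := by
    have h1 := card_erase_add_one hj
    have h2 := card_erase_add_one (mem_univ i)
    rw [card_univ] at h2
    rw [eq_sub_iff_add_eq, ← h2, ← h1]
    push_cast
    ring
  have hsum := card_nsmul_le_sum ((univ.erase i).erase j) f b fun k hk => by
    obtain ⟨hkj, hk⟩ := mem_erase.1 hk
    exact hrest k (mem_erase.1 hk).1 hkj
  rw [nsmul_eq_mul, hcard] at hsum
  rw [← add_sum_erase _ _ (mem_univ i), ← add_sum_erase _ _ hj]
  linarith

theorem largestGap_le_two_div_mul_sum {n : ℕ} (x : Fin (n + 2) → ℝ) (z : ℝ) :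
    largestGap x ≤ 2 / ((n : ℝ) + 2) * ∑ i, largestGap (update x i z) := by
  obtain ⟨i₀, j₀, hG, hsplit⟩ := exists_largestGap_eq x
  set u := x i₀
  set v := x j₀
  set g := fun i => largestGap (update x i z)
  have hgap : IsGap x u v := ⟨⟨i₀, le_rfl⟩, ⟨j₀, le_rfl⟩, hsplit⟩
  rcases (largestGap_nonneg x).eq_or_lt with h0 | hpos
  · rw [← h0]
    exact mul_nonneg (by positivity) (sum_nonneg fun i _ => largestGap_nonneg _)
  have hij : i₀ ≠ j₀ := fun h => by simp [hG, u, v, h] at hpos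
  set w := max u (min z v)
  have huv : u ≤ v := by linarith
  have hright : ∀ i ≠ j₀, v - w ≤ g i := by
    intro i hi
    rcases le_or_gt z w with hz | hz
    · exact ((hgap.mono (le_max_left _ _) le_rfl).update_of_le_left hi.symm le_rfl
        hz).sub_le_largestGap
    · have hw : w = v := by grind
      simpa [hw] using largestGap_nonneg _
  have hleft : ∀ i ≠ i₀, w - u ≤ g i := by
    intro i hi
    rcases le_or_gt w z with hz | hz
    · exact ((hgap.mono le_rfl (max_le huv (min_le_right _ _))).update_of_le_right hi.symm
        le_rfl hz).sub_le_largestGap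
    · have hw : w = u := by grind
      simpa [hw] using largestGap_nonneg _
  have hsum := add_card_sub_two_mul_le_sum hij (f := g) (a := v - u) (b := (v - u) / 2)
    (by linarith [hright i₀ hij, hleft j₀ hij.symm])
    fun k hk₀ hk₁ => by
      rcases le_total w ((u + v) / 2) with h | h
      · linarith [hright k hk₁]
      · linarith [hleft k hk₀]
  rw [Fintype.card_fin] at hsum
  push_cast at hsum
  rw [hG, div_mul_eq_mul_div, le_div_iff₀ (by positivity)]
  linarith

theorem largestGap_update_midpoint_le {n : ℕ} {a b : ℝ} (hab : a < b) (i : Fin (n + 2)) :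
    largestGap (update (fun k : Fin (n + 2) => if k = 0 then a else b) i ((a + b) / 2)) ≤
      (b - a) / 2 := by
  set z := (a + b) / 2 with hz
  have haz : a < z := by linarith
  have hzb : z < b := by linarith
  set y := update (fun k : Fin (n + 2) => if k = 0 then a else b) i z
  have hyi : y i = z := update_self ..
  have hvals : ∀ k, y k = z ∨ y k = a ∧ k = 0 ∨ y k = b := by
    intro k
    simp only [y, update_apply]
    split_ifs <;> simp_all
  have hyb : ∀ k, y k ≤ b := fun k => by rcases hvals k with h | ⟨h, -⟩ | h <;> linarith
  rcases eq_or_ne i 0 with rfl | hi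
  · have hzy : ∀ k, z ≤ y k := fun k => by
      rcases hvals k with h | ⟨-, rfl⟩ | h
      exacts [h.ge, hyi.ge, by linarith]
    calc largestGap y ≤ max (y 0 - z) (b - y 0) := largestGap_le_max_sub hzy hyb 0
      _ = (b - a) / 2 := by rw [hyi, max_eq_right (by linarith), hz]; ring
  · have hay : ∀ k, a ≤ y k := fun k => by rcases hvals k with h | ⟨h, -⟩ | h <;> linarith
    calc largestGap y ≤ max (y i - a) (b - y i) := largestGap_le_max_sub hay hyb i
      _ = (b - a) / 2 := by rw [hyi, max_eq_right (by linarith), hz]; ring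

/-- The best constant of the largest-inner-interval $n$-distance is $2/n$, attained when
$x_1 < x_2 = ⋯ = x_n$ and $z = (x_1+x_2)/2$. -/
theorem largestGap_best_constant (n : ℕ) :
    (∀ (x : Fin (n + 2) → ℝ) (z : ℝ),
      largestGap x ≤ (2 / ((n : ℝ) + 2)) * ∑ i, largestGap (Function.update x i z)) ∧
    (∀ a b : ℝ, a < b →
      largestGap (fun i : Fin (n + 2) => if i = 0 then a else b) =
        (2 / ((n : ℝ) + 2)) *
          ∑ i, largestGap
            (Function.update (fun i : Fin (n + 2) => if i = 0 then a else b) i ((a + b) / 2))) := by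
  refine ⟨largestGap_le_two_div_mul_sum, fun a b hab => ?_⟩
  set x : Fin (n + 2) → ℝ := fun i => if i = 0 then a else b
  have hgap : IsGap x a b :=
    ⟨⟨0, by simp [x]⟩, ⟨1, by simp [x]⟩, fun k => by simp only [x]; split_ifs <;> simp⟩
  refine le_antisymm (largestGap_le_two_div_mul_sum x _) ?_
  calc 2 / ((n : ℝ) + 2) * ∑ i, largestGap (update x i ((a + b) / 2))
      ≤ 2 / ((n : ℝ) + 2) * ∑ _i : Fin (n + 2), (b - a) / 2 := by
        gcongr with i
        exact largestGap_update_midpoint_le hab i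
    _ = b - a := by
        rw [sum_const, card_univ, Fintype.card_fin, nsmul_eq_mul, Nat.cast_add, Nat.cast_two]
        field_simp
    _ ≤ largestGap x := hgap.sub_le_largestGap
end

section
/- Let d be a standard n-distance on X that is repetition invariant, and let k ∈ {2,…,n-1}. For any n₁,…,n_k ≥ 1 with n₁+⋯+n_k = n, define d'(x₁,…,x_k) = d(n₁·x₁,…,n_k·x_k) (each xᵢ repeated nᵢ times). Then d'(x₁,…,x_k) ≤ (1/(k-1) + 1/(k(k-1)(n-1)))·∑_{i=1}^k d'(x₁,…,x_k)ᵢᶻ for all x₁,…,x_k,z ∈ X. -/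
open Finset Function

/-- The \$n\$-tuple obtained by repeating each \$x_j\$ exactly \$m_j\$ times. -/
def blowup {X : Type*} {k n : ℕ} (m : Fin k → ℕ) (h : ∑ j, m j = n) (x : Fin k → X) :
    Fin n → X :=
  fun i => ((List.finRange k).flatMap fun j => List.replicate (m j) (x j)).get
    (Fin.cast (by rw [List.length_flatMap, ← h, Fin.sum_univ_def]; congr 1;
                  simp [Function.comp_def]) i)

/-!
By repetition invariance, `d'` and `d` may be evaluated on any `n`-tuple with the right set of
values. Pad `x` to an `n`-tuple with `n - k ≥ 1` copies of a value `c`, and apply the standard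
simplex inequality of `d` at `z`. Let `S = ∑ᵢ d'(x)ᵢᶻ` and let `E` be the value of `d` on the set
`{x₁, …, x_k, z}`. For `c = z` every replacement in the padding leaves the tuple unchanged, giving
`(k - 1) E ≤ S`. For `c = xᵢ`, replacing `xᵢ` or a padding entry yields the set
`{x₁, …, x_k, z}`, giving `(n - 1) d'(x) ≤ S - d'(x)ᵢᶻ + (n - k + 1) E`. Summing over `i` and
eliminating `E` leaves the constant `(k(n - 1) + 1) / (k(k - 1)(n - 1))`.
-/

section

variable {X : Type*}

theorem range_blowup {k n : ℕ} (m : Fin k → ℕ) (h : ∑ j, m j = n) (hm : ∀ j, 1 ≤ m j)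
    (x : Fin k → X) : Set.range (blowup m h x) = Set.range x := by
  change Set.range (List.get _ ∘ finCongr ?e) = _
  rw [(finCongr _).surjective.range_comp, Set.range_list_get]
  · ext a
    simp [eq_comm, Nat.one_le_iff_ne_zero.mp (hm _)]
  · -- the length identity behind the `Fin.cast` in `blowup`
    simp [← h, Fin.sum_univ_def]

theorem insert_range_update_self {ι : Type*} [DecidableEq ι] (x : ι → X) (i : ι) (z : X) :
    insert (x i) (Set.range (update x i z)) = insert z (Set.range x) := by
  ext a
  simp only [Set.mem_insert_iff, Set.mem_range]
  constructor
  · rintro (rfl | ⟨j, rfl⟩)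
    · exact .inr ⟨i, rfl⟩
    · rcases eq_or_ne j i with rfl | hji
      · exact .inl (update_self ..)
      · exact .inr ⟨j, (update_of_ne hji ..).symm⟩
  · rintro (rfl | ⟨j, rfl⟩)
    · exact .inr ⟨i, update_self ..⟩
    · rcases eq_or_ne j i with rfl | hji
      · exact .inl rfl
      · exact .inr ⟨j, update_of_ne hji ..⟩

theorem range_sumElim_update_const {ι β : Type*} [DecidableEq β] (x : ι → X) (c z : X) (q : β)
    (hc : c ∈ insert z (Set.range x)) :
    Set.range (Sum.elim x (update (fun _ : β => c) q z)) = insert z (Set.range x) := by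
  have := update_self q z (fun _ : β => c)
  ext a
  simp only [Set.Sum.elim_range, Set.mem_union, Set.mem_insert_iff, Set.mem_range] at hc ⊢
  grind [update_apply]

def IsRepInvariant {n : ℕ} (d : (Fin n → X) → ℝ) : Prop :=
  ∀ x y : Fin n → X, Set.range x = Set.range y → d x = d y

theorem cast_card_eq_sub {β : Type*} [Fintype β] {k n : ℕ} (e : Fin k ⊕ β ≃ Fin n) :
    (Fintype.card β : ℝ) = n - k := by
  have := Fintype.card_congr e
  rw [Fintype.card_sum, Fintype.card_fin, Fintype.card_fin] at this
  rw [← this]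
  push_cast
  ring

section Padding

variable {β : Type*} {k n : ℕ} (e : Fin k ⊕ β ≃ Fin n)

def padWith (x : Fin k → X) (c : X) : Fin n → X :=
  Sum.elim x (fun _ : β => c) ∘ e.symm

theorem range_padWith [Nonempty β] (x : Fin k → X) (c : X) :
    Set.range (padWith e x c) = insert c (Set.range x) := by
  rw [padWith, e.symm.surjective.range_comp, Set.Sum.elim_range, Set.range_const,
    Set.union_singleton]

variable [Fintype β] [Nonempty β] {d : (Fin n → X) → ℝ}

theorem sum_update_padWith (hrep : IsRepInvariant d) (x : Fin k → X) {c : X} (z : X)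
    (hc : c ∈ insert z (Set.range x)) :
    ∑ p, d (update (padWith e x c) p z) =
      ∑ j, d (padWith e (update x j z) c) + Fintype.card β * d (padWith e x z) := by
  classical
  have update_comp (u : Fin k ⊕ β → X) (a : Fin k ⊕ β) :
      update (u ∘ e.symm) (e a) z = update u a z ∘ e.symm := by
    rw [update_comp_equiv, Equiv.symm_symm]
  have htail : ∀ q : β, d (update (padWith e x c) (e (.inr q)) z) = d (padWith e x z) := fun q =>
    hrep _ _ <| by
      rw [padWith, update_comp, Sum.update_elim_inr, e.symm.surjective.range_comp,
        range_sumElim_update_const x c z q hc, range_padWith]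
  rw [← e.sum_comp, Fintype.sum_sum_type, Finset.sum_congr rfl fun q _ => htail q,
    Finset.sum_const, Finset.card_univ, nsmul_eq_mul]
  simp only [padWith, update_comp, Sum.update_elim_inl]

variable (hrep : IsRepInvariant d)
  (hstd : ∀ (y : Fin n → X) (z : X), ((n : ℝ) - 1) * d y ≤ ∑ p, d (update y p z))
  {m : Fin k → ℕ} (hm : ∀ j, 1 ≤ m j) (hsum : ∑ j, m j = n)
include hrep hstd hm

theorem sub_one_mul_padWith_le (x : Fin k → X) (z : X) :
    ((k : ℝ) - 1) * d (padWith e x z) ≤ ∑ j, d (blowup m hsum (update x j z)) := by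
  have hhead : ∀ j, d (padWith e (update x j z) z) = d (blowup m hsum (update x j z)) :=
    fun j => hrep _ _ <| by
      rw [range_padWith, range_blowup m hsum hm,
        Set.insert_eq_of_mem (Set.mem_range.2 ⟨j, update_self ..⟩)]
  have := hstd (padWith e x z) z
  rw [sum_update_padWith e hrep x z (Set.mem_insert _ _),
    Finset.sum_congr rfl fun j _ => hhead j, cast_card_eq_sub e] at this
  linarith

theorem sub_one_mul_blowup_le (x : Fin k → X) (z : X) (i : Fin k) :
    ((n : ℝ) - 1) * d (blowup m hsum x) ≤
      ∑ j, d (blowup m hsum (update x j z)) - d (blowup m hsum (update x i z)) +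
        ((n : ℝ) - k + 1) * d (padWith e x z) := by
  have hx : d (blowup m hsum x) = d (padWith e x (x i)) := hrep _ _ <| by
    rw [range_blowup m hsum hm, range_padWith, Set.insert_eq_of_mem (Set.mem_range_self i)]
  have hhead : ∀ j ≠ i, d (padWith e (update x j z) (x i)) = d (blowup m hsum (update x j z)) :=
    fun j hji => hrep _ _ <| by
      rw [range_padWith, range_blowup m hsum hm,
        Set.insert_eq_of_mem (Set.mem_range.2 ⟨i, update_of_ne (Ne.symm hji) ..⟩)]
  have hself : d (padWith e (update x i z) (x i)) = d (padWith e x z) := hrep _ _ <| by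
    rw [range_padWith, range_padWith, insert_range_update_self]
  have := hstd (padWith e x (x i)) z
  rw [sum_update_padWith e hrep x z (Set.mem_insert_of_mem _ (Set.mem_range_self i)),
    cast_card_eq_sub e, ← hx, ← Finset.add_sum_erase _ _ (Finset.mem_univ i), hself,
    Finset.sum_congr rfl fun j hj => hhead j (Finset.ne_of_mem_erase hj)] at this
  rw [← Finset.add_sum_erase _ _ (Finset.mem_univ i)]
  linarith

theorem mul_sub_one_mul_blowup_le (x : Fin k → X) (z : X) :
    k * (((n : ℝ) - 1) * d (blowup m hsum x)) ≤
      ((k : ℝ) - 1) * ∑ j, d (blowup m hsum (update x j z)) +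
        k * (((n : ℝ) - k + 1) * d (padWith e x z)) := by
  have := Finset.sum_le_sum fun i (_ : i ∈ Finset.univ) =>
    sub_one_mul_blowup_le e hrep hstd hm hsum x z i
  simp only [Finset.sum_const, Finset.card_univ, Fintype.card_fin, nsmul_eq_mul,
    Finset.sum_add_distrib, Finset.sum_sub_distrib] at this
  linarith

end Padding

theorem le_strong_simplex_const_mul {k n D S E : ℝ} (hk : 1 < k) (hkn : k < n)
    (hD : k * ((n - 1) * D) ≤ (k - 1) * S + k * ((n - k + 1) * E)) (hE : (k - 1) * E ≤ S) :
    D ≤ (1 / (k - 1) + 1 / (k * (k - 1) * (n - 1))) * S := by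
  have hk1 : 0 < k - 1 := by linarith
  have hn1 : 0 < n - 1 := by linarith
  have hconst : 1 / (k - 1) + 1 / (k * (k - 1) * (n - 1)) =
      (k * (n - 1) + 1) / (k * (k - 1) * (n - 1)) := by
    field_simp
  rw [hconst, div_mul_eq_mul_div, le_div_iff₀ (by positivity)]
  nlinarith [mul_le_mul_of_nonneg_left hE (by nlinarith : 0 ≤ k * (n - k + 1))]

end

theorem standard_repInv_strong_simplex_general {X : Type*} {n : ℕ}
    (d : (Fin n → X) → ℝ)
    (hstd : ∀ (x : Fin n → X) (z : X),
      d x ≤ (1 / ((n : ℝ) - 1)) * ∑ i, d (Function.update x i z))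
    (hrep : ∀ x y : Fin n → X, Set.range x = Set.range y → d x = d y)
    (k : ℕ) (hk2 : 2 ≤ k) (hkn : k ≤ n - 1)
    (m : Fin k → ℕ) (hm : ∀ j, 1 ≤ m j) (hsum : ∑ j, m j = n) :
    ∀ (x : Fin k → X) (z : X),
      d (blowup m hsum x) ≤
        (1 / ((k : ℝ) - 1) + 1 / ((k : ℝ) * ((k : ℝ) - 1) * ((n : ℝ) - 1))) *
          ∑ i : Fin k, d (blowup m hsum (Function.update x i z)) := by
  intro x z
  have hkn' : k < n := by omega
  have hn1 : (0 : ℝ) < n - 1 := by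
    rw [sub_pos]
    exact_mod_cast (by omega : 1 < n)
  have hstd' (y : Fin n → X) (w : X) : ((n : ℝ) - 1) * d y ≤ ∑ p, d (update y p w) := by
    rw [← le_div_iff₀' hn1, div_eq_inv_mul, ← one_div]
    exact hstd y w
  have : Nonempty (Fin (n - k)) := ⟨⟨0, by omega⟩⟩
  let e : Fin k ⊕ Fin (n - k) ≃ Fin n := finSumFinEquiv.trans (finCongr (by omega))
  exact le_strong_simplex_const_mul (by exact_mod_cast hk2) (by exact_mod_cast hkn')
    (mul_sub_one_mul_blowup_le e hrep hstd' hm hsum x z)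
    (sub_one_mul_padWith_le e hrep hstd' hm hsum x z)

/-- A standard repetition-invariant $n$-distance satisfies the strong $k$-simplex inequality
with constant $1/(k-1) + 1/(k(k-1)(n-1))$. -/
theorem standard_repInv_strong_simplex {X : Type*} {n : ℕ} (hn : 3 ≤ n)
    (d : (Fin n → X) → ℝ) (hd : IsNDistance d)
    (hstd : ∀ (x : Fin n → X) (z : X),
      d x ≤ (1 / ((n : ℝ) - 1)) * ∑ i, d (Function.update x i z))
    (hrep : ∀ x y : Fin n → X, Set.range x = Set.range y → d x = d y)
    (k : ℕ) (hk2 : 2 ≤ k) (hkn : k ≤ n - 1)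
    (m : Fin k → ℕ) (hm : ∀ j, 1 ≤ m j) (hsum : ∑ j, m j = n) :
    ∀ (x : Fin k → X) (z : X),
      d (blowup m hsum x) ≤
        (1 / ((k : ℝ) - 1) + 1 / ((k : ℝ) * ((k : ℝ) - 1) * ((n : ℝ) - 1))) *
          ∑ i : Fin k, d (blowup m hsum (Function.update x i z)) :=
  standard_repInv_strong_simplex_general d hstd hrep k hk2 hkn m hm hsum
end

section
/- Let d be a standard n-distance on X, g : X² → ℝ≥0, and z ∈ X with d(x,z,…,z) ≤ g(x,z) for all x ∈ X. Then for every k ∈ {1,…,n}, d(x₁,…,x_k,z,…,z) ≤ ∑_{i=1}^k g(xᵢ,z) for all x₁,…,x_k ∈ X; in particular d(x₁,…,xₙ) ≤ ∑_{i=1}^n g(xᵢ,z). -/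
open Finset Function

/-!
Induct on the set `s` of coordinates where the tuple `y` takes the values of `x`, all others
being `z`. Replacing the `i`-th of them by `z` gives the tuple for `s \ {i}`, so by induction
every term of the standard inequality restricted to `s` is at most
`∑_{j ∈ s} g(x_j, z) - g(x_i, z)`; summing over `i ∈ s` gives
`(|s| - 1) d(y) ≤ (|s| - 1) ∑_{j ∈ s} g(x_j, z)`. Singletons are the hypothesis on `g` up to a
transposition, and `s = ∅` is a constant tuple.
-/

section

variable {X : Type*} {n : ℕ}

def IsStandard (d : (Fin n → X) → ℝ) : Prop :=
  ∀ (x : Fin n → X) (z : X), d x ≤ (1 / ((n : ℝ) - 1)) * ∑ i, d (update x i z)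

-- The coordinates outside `s` contribute `(n - #s) • d y` to the full standard inequality.
theorem IsStandard.card_sub_one_mul_le_sum_update {d : (Fin n → X) → ℝ} (hstd : IsStandard d)
    {s : Finset (Fin n)} (hs : 1 < #s) {y : Fin n → X} {z : X} (hy : ∀ i ∉ s, y i = z) :
    ((#s : ℝ) - 1) * d y ≤ ∑ i ∈ s, d (update y i z) := by
  have hsn : #s ≤ n := card_le_univ s |>.trans_eq (Fintype.card_fin n)
  have hn : (1 : ℝ) < n := by exact_mod_cast hs.trans_le hsn
  have houtside : ∑ i ∈ sᶜ, d (update y i z) = ((n : ℝ) - #s) * d y := by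
    rw [sum_congr rfl fun i hi => by rw [← hy i (mem_compl.mp hi), update_eq_self], sum_const,
      card_compl, Fintype.card_fin, nsmul_eq_mul, Nat.cast_sub hsn]
  have h := mul_le_mul_of_nonneg_left (hstd y z) (sub_pos.mpr hn).le
  rw [← sum_add_sum_compl s, houtside, ← mul_assoc, mul_one_div_cancel (sub_pos.mpr hn).ne',
    one_mul] at h
  linarith

theorem IsNDistance.apply_update_const_comm {d : (Fin n → X) → ℝ} (hd : IsNDistance d)
    (z w : X) (a b : Fin n) : d (update (fun _ => z) a w) = d (update (fun _ => z) b w) := by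
  rw [← hd.symm _ (Equiv.swap a b), update_comp_equiv, Equiv.symm_swap, Equiv.swap_apply_left]
  rfl

theorem Finset.update_piecewise_self_of_mem {ι : Type*} [DecidableEq ι] {β : Type*} {s : Finset ι}
    {i : ι} (hi : i ∈ s) (f g : ι → β) :
    update (s.piecewise f g) i (g i) = (s.erase i).piecewise f g := by
  ext j
  rcases eq_or_ne j i with rfl | hj <;> simp [Finset.piecewise, *]

theorem IsNDistance.apply_piecewise_const_le_sum {d : (Fin n → X) → ℝ} (hd : IsNDistance d)
    (hstd : IsStandard d) {g : X → X → ℝ} {z : X}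
    (hg : ∀ (a : Fin n) (w : X), d (update (fun _ => z) a w) ≤ g w z)
    (s : Finset (Fin n)) (x : Fin n → X) :
    d (s.piecewise x fun _ => z) ≤ ∑ i ∈ s, g (x i) z := by
  induction s using Finset.strongInduction with
  | H s ih =>
  obtain hs | hs := lt_or_ge 1 (#s)
  · set S := ∑ i ∈ s, g (x i) z
    have hterm : ∀ i ∈ s, d (update (s.piecewise x fun _ => z) i z) ≤ S - g (x i) z := by
      intro i hi
      rw [← sum_erase_eq_sub hi, update_piecewise_self_of_mem hi]
      exact ih _ (erase_ssubset hi)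
    have hk : (0 : ℝ) < #s - 1 := by
      rw [sub_pos]; exact_mod_cast hs
    refine le_of_mul_le_mul_left ?_ hk
    calc ((#s : ℝ) - 1) * d (s.piecewise x fun _ => z)
        ≤ ∑ i ∈ s, d (update (s.piecewise x fun _ => z) i z) :=
          hstd.card_sub_one_mul_le_sum_update hs fun i hi => piecewise_eq_of_notMem _ _ _ hi
      _ ≤ ∑ i ∈ s, (S - g (x i) z) := sum_le_sum hterm
      _ = (#s - 1) * S := by rw [sum_sub_distrib, sum_const, nsmul_eq_mul]; ring
  · obtain hs | hs := Nat.le_one_iff_eq_zero_or_eq_one.mp hs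
    · rw [card_eq_zero.mp hs, piecewise_empty, sum_empty]
      exact ((hd.eq_zero_iff _).mpr fun _ _ => rfl).le
    · obtain ⟨a, rfl⟩ := card_eq_one.mp hs
      rw [piecewise_singleton, sum_singleton]
      exact hg a (x a)

end

theorem standard_dominated_sum_general {X : Type*} {n : ℕ}
    (d : (Fin n → X) → ℝ) (hd : IsNDistance d)
    (hstd : ∀ (x : Fin n → X) (z : X),
      d x ≤ (1 / ((n : ℝ) - 1)) * ∑ i, d (Function.update x i z))
    (g : X → X → ℝ) (z : X)
    (hg : ∀ x : X, d (fun i : Fin n => if (i : ℕ) = 0 then x else z) ≤ g x z) :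
    (∀ k, 1 ≤ k → k ≤ n → ∀ x : Fin n → X,
      d (fun i : Fin n => if (i : ℕ) < k then x i else z) ≤
        ∑ i ∈ Finset.univ.filter (fun i : Fin n => (i : ℕ) < k), g (x i) z) ∧
    (∀ x : Fin n → X, d x ≤ ∑ i, g (x i) z) := by
  have hg_update (a : Fin n) (w : X) : d (update (fun _ => z) a w) ≤ g w z := by
    rw [hd.apply_update_const_comm z w a ⟨0, a.pos⟩]
    convert hg w using 2
    ext i
    simp [update_apply, Fin.ext_iff]
  have hbound := hd.apply_piecewise_const_le_sum hstd hg_update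
  refine ⟨fun k _ _ x => ?_, fun x => by simpa using hbound univ x⟩
  convert hbound (univ.filter fun i : Fin n => (i : ℕ) < k) x using 2
  ext i
  simp [Finset.piecewise]

/-- For a standard $n$-distance dominated on "two-point" tuples by $g$, the distance of
$(x_1,…,x_k,z,…,z)$ is at most $∑_{i=1}^k g(x_i,z)$. -/
theorem standard_dominated_sum {X : Type*} {n : ℕ} (hn : 2 ≤ n)
    (d : (Fin n → X) → ℝ) (hd : IsNDistance d)
    (hstd : ∀ (x : Fin n → X) (z : X),
      d x ≤ (1 / ((n : ℝ) - 1)) * ∑ i, d (Function.update x i z))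
    (g : X → X → ℝ) (z : X)
    (hg : ∀ x : X, d (fun i : Fin n => if (i : ℕ) = 0 then x else z) ≤ g x z) :
    (∀ k, 1 ≤ k → k ≤ n → ∀ x : Fin n → X,
      d (fun i : Fin n => if (i : ℕ) < k then x i else z) ≤
        ∑ i ∈ Finset.univ.filter (fun i : Fin n => (i : ℕ) < k), g (x i) z) ∧
    (∀ x : Fin n → X, d x ≤ ∑ i, g (x i) z) :=
  standard_dominated_sum_general d hd hstd g z hg
end
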